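/- arXiv:2001.09594 — 6 statements merged into one kernel-verified Lean document; each statement's English description precedes it below -/
import Mathlib

section
/- The coded homogeneous distortion D_Coded(K) = (σ_θ²/K)(γ_ch/((1+γ_ch)γ_ob) + (K+γ_ch)/(1+γ_ch)²) is strictly decreasing in K and converges to σ_θ²/(1+γ_ch)² as K → ∞. -/
/-! For `K ≥ 1` the distortion splits as `D K = σθ2 / (1 + γch)^2 + B / K` with
`B = σθ2 * (γch / ((1 + γch) * γob) + γch / (1 + γch)^2) > 0`; both claims are read off this form. -/

open Filter

lemma div_mul_add_add_div_eq {F : Type*} [Field F] (σ a c d K : F) (hK : K ≠ 0) (hd : d ≠ 0) :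
    σ / K * (a + (K + c) / d) = σ / d + σ * (a + c / d) / K := by
  field_simp
  ring

/-- D_Coded is strictly decreasing in K and converges to σθ²/(1+γch)². -/
theorem coded_distortion_decreasing_and_limit
    (σθ2 γob γch : ℝ) (hσ : 0 < σθ2) (hob : 0 < γob) (hch : 0 < γch)
    (D : ℕ → ℝ)
    (hD : ∀ K, D K = σθ2 / K * (γch / ((1 + γch) * γob) + ((K : ℝ) + γch) / (1 + γch)^2)) :
    (∀ K₁ K₂ : ℕ, 1 ≤ K₁ → K₁ < K₂ → D K₂ < D K₁)
    ∧ Tendsto D atTop (nhds (σθ2 / (1 + γch)^2)) := by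
  set B := σθ2 * (γch / ((1 + γch) * γob) + γch / (1 + γch)^2)
  have hB : 0 < B := by positivity
  have hD_split : ∀ K : ℕ, 1 ≤ K → D K = σθ2 / (1 + γch)^2 + B / K := fun K hK =>
    (hD K).trans (div_mul_add_add_div_eq _ _ _ _ _ (by positivity) (by positivity))
  refine ⟨fun K₁ K₂ hK₁ hlt => ?_, ?_⟩
  · have hK₁_pos : (0 : ℝ) < K₁ := by exact_mod_cast hK₁
    rw [hD_split K₁ hK₁, hD_split K₂ (hK₁.trans hlt.le)]
    gcongr
  · have hD_eventually : D =ᶠ[atTop] fun K : ℕ => σθ2 / (1 + γch)^2 + B / K := by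
      filter_upwards [eventually_ge_atTop 1] with K hK using hD_split K hK
    rw [tendsto_congr' hD_eventually]
    simpa using tendsto_const_nhds.add (tendsto_const_div_atTop_nhds_zero_nat B)
end

section
/- For K = 1 or K = 2, D_Coded < D_Uncoded for all positive γ_ob and γ_ch; that is, the coded scheme strictly outperforms the uncoded scheme. -/
/-!
The inequality holds term by term, after discarding the positive term `1 / (γob * γch)`:
`γch / ((1 + γch) * γob) < 1 / γob` because `γch < 1 + γch`, and
`(K + γch) / (1 + γch)^2 < 1 / γch` because `γch * (K + γch) < (1 + γch)^2` reduces to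
`(K - 2) * γch < 1`, which holds for every `K ≤ 2`.
-/

lemma div_one_add_mul_lt_one_div {a c : ℝ} (ha : 0 < a) (hc : 0 < c) :
    c / ((1 + c) * a) < 1 / a := by
  rw [div_lt_div_iff₀ (by positivity) ha]
  nlinarith

lemma add_div_one_add_sq_lt_one_div {K c : ℝ} (hK : K ≤ 2) (hc : 0 < c) :
    (K + c) / (1 + c) ^ 2 < 1 / c := by
  rw [div_lt_div_iff₀ (by positivity) hc]
  nlinarith

/-- For K = 1 or K = 2, the coded scheme strictly outperforms the uncoded one. -/
theorem coded_beats_uncoded_small_K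
    (K : ℕ) (hK : K = 1 ∨ K = 2) (σθ2 γob γch : ℝ)
    (hσ : 0 < σθ2) (hob : 0 < γob) (hch : 0 < γch) :
    σθ2 / K * (γch / ((1 + γch) * γob) + ((K : ℝ) + γch) / (1 + γch)^2)
      < σθ2 / K * (1 / γob + 1 / γch + 1 / (γob * γch)) := by
  have hK_pos : (0 : ℝ) < K := by rcases hK with rfl | rfl <;> norm_num
  have hK_le : (K : ℝ) ≤ 2 := by rcases hK with rfl | rfl <;> norm_num
  refine mul_lt_mul_of_pos_left ?_ (div_pos hσ hK_pos)
  have hob_term := div_one_add_mul_lt_one_div hob hch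
  have hch_term := add_div_one_add_sq_lt_one_div hK_le hch
  have hcross : 0 < 1 / (γob * γch) := by positivity
  linarith
end

section
/- For K ≥ 3, D_Coded < D_Uncoded if and only if (K−2)γ_ch − 1 − (1/γ_ob)(γ_ch+1)(2γ_ch+1) < 0; in particular if γ_ch < 1/(K−2) the coded scheme outperforms the uncoded scheme for all γ_ob > 0. -/
/-!
Clearing denominators, the gap between the two distortions is
`D_Uncoded - D_Coded = -(σ_θ²/K) · m / (γ_ch (1 + γ_ch)²)`, where
`m = (K - 2) γ_ch - 1 - (γ_ch + 1)(2γ_ch + 1)/γ_ob` is the margin of the criterion; so coded wins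
exactly when `m < 0`. If `(K - 2) γ_ch < 1`, then already `(K - 2) γ_ch - 1 < 0` and the
subtracted term is positive, so `m < 0` whatever `γ_ob > 0` is.
-/

theorem uncoded_sub_coded_eq (K γob γch : ℝ) (hob : γob ≠ 0) (hch : γch ≠ 0)
    (hch1 : 1 + γch ≠ 0) :
    (1 / γob + 1 / γch + 1 / (γob * γch))
        - (γch / ((1 + γch) * γob) + (K + γch) / (1 + γch) ^ 2)
      = -((K - 2) * γch - 1 - (1 / γob) * (γch + 1) * (2 * γch + 1))
          / (γch * (1 + γch) ^ 2) := by
  field_simp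
  ring

theorem coded_lt_uncoded_iff (K γob γch : ℝ) (hob : γob ≠ 0) (hch : 0 < γch) :
    γch / ((1 + γch) * γob) + (K + γch) / (1 + γch) ^ 2
        < 1 / γob + 1 / γch + 1 / (γob * γch)
      ↔ (K - 2) * γch - 1 - (1 / γob) * (γch + 1) * (2 * γch + 1) < 0 := by
  rw [← sub_pos, uncoded_sub_coded_eq K γob γch hob hch.ne' (by positivity),
    div_pos_iff_of_pos_right (by positivity), neg_pos]

theorem criterion_neg_of_lt_inv (K γob γch : ℝ) (hK : 2 < K) (hob : 0 < γob)
    (hch : 0 < γch) (hlt : γch < 1 / (K - 2)) :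
    (K - 2) * γch - 1 - (1 / γob) * (γch + 1) * (2 * γch + 1) < 0 := by
  have hsmall : (K - 2) * γch < 1 := by
    rwa [lt_div_iff₀ (sub_pos.mpr hK), mul_comm] at hlt
  have hpos : 0 < (1 / γob) * (γch + 1) * (2 * γch + 1) := by positivity
  linarith

/-- For K ≥ 3, coded beats uncoded iff (K−2)γch − 1 − (1/γob)(γch+1)(2γch+1) < 0;
in particular γch < 1/(K−2) suffices for all γob > 0. -/
theorem coded_beats_uncoded_iff_large_K
    (K : ℕ) (hK : 3 ≤ K) (σθ2 γob γch : ℝ)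
    (hσ : 0 < σθ2) (hob : 0 < γob) (hch : 0 < γch) :
    (σθ2 / K * (γch / ((1 + γch) * γob) + ((K : ℝ) + γch) / (1 + γch)^2)
        < σθ2 / K * (1 / γob + 1 / γch + 1 / (γob * γch))
      ↔ ((K : ℝ) - 2) * γch - 1 - (1 / γob) * (γch + 1) * (2 * γch + 1) < 0)
    ∧ (γch < 1 / ((K : ℝ) - 2) →
        σθ2 / K * (γch / ((1 + γch) * γob) + ((K : ℝ) + γch) / (1 + γch)^2)
          < σθ2 / K * (1 / γob + 1 / γch + 1 / (γob * γch))) := by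
  have hK2 : (2 : ℝ) < K := by exact_mod_cast hK
  have hscale : 0 < σθ2 / K := by positivity
  have hiff := (mul_lt_mul_iff_right₀ hscale).trans (coded_lt_uncoded_iff K γob γch hob.ne' hch)
  exact ⟨hiff, fun hlt => hiff.mpr (criterion_neg_of_lt_inv K γob γch hK2 hob hch hlt)⟩
end

section
/- For K ≥ 3, the function f(γ_ch) = (γ_ch+1)(2γ_ch+1)/((K−2)γ_ch − 1), defined for γ_ch > 1/(K−2), attains its minimum value γ*_ob = (3K−2+2√(2(K²−K)))/(K−2)² at γ_ch = (√((K²−K)/2)+1)/(K−2). -/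
/-! Put `d = (K - 2) γ - 1` and `s = √((K² - K) / 2)`. Since `(K - 1) K = K² - K = 2 s²`,
`(K - 2)² f(γ) = 2 d + 2 s² / d + 3K - 2`, and by AM–GM `2 d + 2 s² / d ≥ 4 s`, with equality
exactly at `d = s`, i.e. at `γ = (s + 1) / (K - 2)`. -/

theorem Real.sqrt_two_mul_eq_two_mul_sqrt_div_two (x : ℝ) :
    Real.sqrt (2 * x) = 2 * Real.sqrt (x / 2) := by
  rw [show 2 * x = 2 ^ 2 * (x / 2) by ring, Real.sqrt_mul (by norm_num), Real.sqrt_sq zero_le_two]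

theorem two_mul_le_add_sq_div {d : ℝ} (hd : 0 < d) (s : ℝ) : 2 * s ≤ d + s ^ 2 / d := by
  have key : d + s ^ 2 / d - 2 * s = (d - s) ^ 2 / d := by field_simp; ring
  linarith [show 0 ≤ (d - s) ^ 2 / d by positivity]

theorem add_one_mul_two_mul_add_one_div_eq {K γ : ℝ} (hK : K - 2 ≠ 0) (hd : (K - 2) * γ - 1 ≠ 0) :
    (γ + 1) * (2 * γ + 1) / ((K - 2) * γ - 1)
      = (2 * ((K - 2) * γ - 1) + (K ^ 2 - K) / ((K - 2) * γ - 1) + (3 * K - 2)) / (K - 2) ^ 2 := by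
  set d := (K - 2) * γ - 1
  have hγ : γ = (d + 1) / (K - 2) := by
    rw [eq_div_iff hK]; ring
  rw [hγ]
  field_simp
  ring

/-- The function f(γ) = (γ+1)(2γ+1)/((K−2)γ−1) on γ > 1/(K−2) attains its minimum
γ*_ob at γ = (√((K²−K)/2)+1)/(K−2). -/
theorem min_of_f
    (K : ℕ) (hK : 3 ≤ K) :
    let f : ℝ → ℝ := fun γ => (γ + 1) * (2 * γ + 1) / (((K : ℝ) - 2) * γ - 1)
    let γstar : ℝ := (3 * (K : ℝ) - 2 + 2 * Real.sqrt (2 * ((K : ℝ)^2 - K))) / ((K : ℝ) - 2)^2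
    let γm : ℝ := (Real.sqrt (((K : ℝ)^2 - K) / 2) + 1) / ((K : ℝ) - 2)
    (1 / ((K : ℝ) - 2) < γm)
    ∧ f γm = γstar
    ∧ (∀ γ : ℝ, 1 / ((K : ℝ) - 2) < γ → γstar ≤ f γ) := by
  intro f γstar γm
  have hc : (0 : ℝ) < K - 2 := by
    have : (3 : ℝ) ≤ K := by exact_mod_cast hK
    linarith
  set s := Real.sqrt (((K : ℝ) ^ 2 - K) / 2)
  have hs_pos : 0 < s := Real.sqrt_pos.mpr (by nlinarith)
  have hs_sq : (K : ℝ) ^ 2 - K = 2 * s ^ 2 := by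
    rw [Real.sq_sqrt (by nlinarith)]; ring
  have hγstar : γstar = (4 * s + (3 * K - 2)) / ((K : ℝ) - 2) ^ 2 := by
    simp only [γstar, Real.sqrt_two_mul_eq_two_mul_sqrt_div_two]
    ring
  have hγm : γm = (s + 1) / ((K : ℝ) - 2) := rfl
  have hγm_sub : ((K : ℝ) - 2) * γm - 1 = s := by
    rw [hγm]; field_simp; ring
  refine ⟨?_, ?_, fun γ hγ => ?_⟩
  · exact div_lt_div_of_pos_right (by linarith) hc
  · simp only [f]
    rw [add_one_mul_two_mul_add_one_div_eq hc.ne' (by linarith), hγm_sub, hs_sq, hγstar]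
    congr 1
    field_simp
    ring
  · have hd : 0 < ((K : ℝ) - 2) * γ - 1 := by
      rw [div_lt_iff₀ hc] at hγ; linarith
    simp only [f]
    rw [add_one_mul_two_mul_add_one_div_eq hc.ne' hd.ne', hγstar, hs_sq]
    apply div_le_div_of_nonneg_right _ (by positivity)
    have amgm := two_mul_le_add_sq_div hd s
    rw [mul_div_assoc]
    linarith
end

section
/- For K ≥ 3 and γ_ob < γ*_ob = (3K−2+2√(2(K²−K)))/(K−2)², the coded scheme outperforms the uncoded scheme for all γ_ch > 0, i.e., γ_ob < (γ_ch+1)(2γ_ch+1)/max((K−2)γ_ch−1, 0⁺) holds for every γ_ch > 0. -/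
/-!
Clearing denominators, `D_Uncoded - D_Coded` has the sign of the quadratic
`2 γ_ch² - b γ_ch + (1 + γ_ob)` in `γ_ch`, where `b = γ_ob (K - 2) - 3`. It is positive for
`γ_ch > 0` as soon as `b ≤ 0` or its discriminant `b² - 8 (1 + γ_ob)` is negative.
That discriminant, as a quadratic in `γ_ob`, has `γ*_ob` as its larger root, and its smaller root
`γ⁻_ob` satisfies `γ⁻_ob (K - 2) ≤ 3`; so every `γ_ob < γ*_ob` falls in one of the two cases.
-/

/-- The threshold `γ*_ob`, for `k = K`. -/
noncomputable def critObsSNR (k : ℝ) : ℝ :=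
  (3 * k - 2 + 2 * Real.sqrt (2 * (k ^ 2 - k))) / (k - 2) ^ 2

lemma uncoded_sub_coded_eq_s10 (k a c : ℝ) (ha : a ≠ 0) (hc : c ≠ 0) (hc₁ : 1 + c ≠ 0) :
    1 / a + 1 / c + 1 / (a * c) - (c / ((1 + c) * a) + (k + c) / (1 + c) ^ 2)
      = (2 * c ^ 2 - (a * (k - 2) - 3) * c + (1 + a)) / (a * c * (1 + c) ^ 2) := by
  field_simp
  ring

lemma quadratic_pos_of_nonneg {p b d c : ℝ} (hp : 0 < p) (hd : 0 < d) (hc : 0 ≤ c)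
    (hb : b ≤ 0 ∨ b ^ 2 < 4 * p * d) : 0 < p * c ^ 2 - b * c + d := by
  rcases hb with hb | hb
  · nlinarith [mul_nonneg hc (neg_nonneg.mpr hb), sq_nonneg c]
  · -- `4 p (p c² - b c + d) = (2 p c - b)² + (4 p d - b²)`
    nlinarith [sq_nonneg (2 * p * c - b)]

lemma sub_three_nonpos_or_sq_lt_of_lt_critObsSNR {k a : ℝ} (hk : 2 < k)
    (ha : a < critObsSNR k) : a * (k - 2) - 3 ≤ 0 ∨ (a * (k - 2) - 3) ^ 2 < 8 * (1 + a) := by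
  refine or_iff_not_imp_left.mpr fun hb => ?_
  replace hb := not_le.mp hb
  set s := Real.sqrt (2 * (k ^ 2 - k))
  have hs : s ^ 2 = 2 * (k ^ 2 - k) := Real.sq_sqrt (by nlinarith)
  have hs₂ : 2 ≤ s := by nlinarith [Real.sqrt_nonneg (2 * (k ^ 2 - k))]
  have hk₂ : 0 < (k - 2) ^ 2 := by positivity
  have hupper : (k - 2) ^ 2 * a - (3 * k - 2) < 2 * s := by
    have := (lt_div_iff₀ hk₂).mp ha
    linarith
  have hlower : -(2 * s) < (k - 2) ^ 2 * a - (3 * k - 2) := by nlinarith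
  have hsq : ((k - 2) ^ 2 * a - (3 * k - 2)) ^ 2 < (2 * s) ^ 2 := by
    nlinarith
  have hfactor : (k - 2) ^ 2 * ((a * (k - 2) - 3) ^ 2 - 8 * (1 + a))
      = ((k - 2) ^ 2 * a - (3 * k - 2)) ^ 2 - (2 * s) ^ 2 := by
    rw [mul_pow, hs]
    ring
  nlinarith

/-- For K ≥ 3 and γob < γ*_ob, the coded scheme outperforms the uncoded scheme
for every channel SNR γch > 0. -/
theorem coded_beats_uncoded_low_observation_SNR
    (K : ℕ) (hK : 3 ≤ K) (σθ2 γob : ℝ)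
    (hσ : 0 < σθ2) (hob : 0 < γob)
    (hsmall : γob < (3 * (K : ℝ) - 2 + 2 * Real.sqrt (2 * ((K : ℝ)^2 - K))) / ((K : ℝ) - 2)^2) :
    ∀ γch : ℝ, 0 < γch →
      σθ2 / K * (γch / ((1 + γch) * γob) + ((K : ℝ) + γch) / (1 + γch)^2)
        < σθ2 / K * (1 / γob + 1 / γch + 1 / (γob * γch)) := by
  intro γch hch
  have hK₂ : (2 : ℝ) < K := by
    have : (3 : ℝ) ≤ K := by exact_mod_cast hK
    linarith
  have hquad : 0 < 2 * γch ^ 2 - (γob * (K - 2) - 3) * γch + (1 + γob) :=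
    quadratic_pos_of_nonneg two_pos (by linarith) hch.le
      ((sub_three_nonpos_or_sq_lt_of_lt_critObsSNR hK₂ hsmall).imp id fun h => by linarith)
  refine mul_lt_mul_of_pos_left ?_ (by positivity)
  rw [← sub_pos, uncoded_sub_coded_eq_s10 _ _ _ hob.ne' hch.ne' (by positivity)]
  exact div_pos hquad (by positivity)
end

section
/- In a heterogeneous system, if ∑_{k=1}^K (1+2γ_chk)γ_obk/((1+γ_chk+γ_obk)γ_chk) > (∑_{k=1}^K γ_obk/(1+γ_chk+γ_obk))², then the coded distortion D_Coded (given by Theorem 1) is strictly smaller than the uncoded distortion D_Uncoded = σ_θ²(∑_k 1/(1/γ_obk + 1/γ_chk + 1/(γ_obk γ_chk)))⁻¹. -/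
/-!
With the weights `w_k = γ_obk / ((1 + γ_chk + γ_obk) γ_chk)` every summand in sight is `w_k`
times a polynomial in `γ_chk`. Writing `P = ∑ w_k`, `Q = ∑ w_k γ_chk`, `R = ∑ w_k γ_chk²`, one gets
`σ_θ² / D_Uncoded = R`, `σ_θ² / D_Coded = P + 2Q + R - (P + Q)² / (1 + P) = R + (P + 2Q - Q²) / (1 + P)`,
and the hypothesis says exactly `Q² < P + 2Q`.
-/

open Finset

noncomputable def sensorWeight (c o : ℝ) : ℝ := o / ((1 + c + o) * c)

section sensorWeight

-- Here `c = γ_chk` and `o = γ_obk`; `u_k` and `λ_k` appear written out.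
variable {c o : ℝ}

lemma sensorWeight_pos (hc : 0 < c) (ho : 0 < o) : 0 < sensorWeight c o := by
  unfold sensorWeight; positivity

lemma one_div_lam_eq (hc : 0 < c) (ho : 0 < o) :
    1 / ((1 + c + o) * c / ((1 + c) ^ 2 * o)) = (1 + c) ^ 2 * sensorWeight c o := by
  unfold sensorWeight; field_simp

lemma u_div_lam_eq (hc : 0 < c) (ho : 0 < o) :
    1 / (1 + c) / ((1 + c + o) * c / ((1 + c) ^ 2 * o)) = (1 + c) * sensorWeight c o := by
  unfold sensorWeight; field_simp

lemma u_sq_div_lam_eq (hc : 0 < c) (ho : 0 < o) :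
    (1 / (1 + c)) ^ 2 / ((1 + c + o) * c / ((1 + c) ^ 2 * o)) = sensorWeight c o := by
  unfold sensorWeight; field_simp

lemma one_div_uncoded_eq (hc : 0 < c) (ho : 0 < o) :
    1 / (1 / o + 1 / c + 1 / (o * c)) = sensorWeight c o * c ^ 2 := by
  unfold sensorWeight; field_simp; ring

lemma one_add_two_mul_mul_div_eq (hc : 0 < c) (ho : 0 < o) :
    (1 + 2 * c) * o / ((1 + c + o) * c) = sensorWeight c o * (1 + 2 * c) := by
  unfold sensorWeight; field_simp

lemma div_one_add_add_eq (hc : 0 < c) (ho : 0 < o) :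
    o / (1 + c + o) = sensorWeight c o * c := by
  unfold sensorWeight; field_simp

end sensorWeight

lemma add_two_mul_sub_sq_div_one_add {P Q : ℝ} (hP : 1 + P ≠ 0) :
    P + 2 * Q - (P + Q) ^ 2 / (1 + P) = (P + 2 * Q - Q ^ 2) / (1 + P) := by
  field_simp; ring

lemma inv_sub_schur_lt_inv {ι : Type*} [Fintype ι] [Nonempty ι] {w c : ι → ℝ}
    (hw : ∀ i, 0 < w i) (hc : ∀ i, 0 < c i)
    (h : ∑ i, w i * (1 + 2 * c i) > (∑ i, w i * c i) ^ 2) :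
    (∑ i, (1 + c i) ^ 2 * w i - (∑ i, (1 + c i) * w i) ^ 2 / (1 + ∑ i, w i))⁻¹
      < (∑ i, w i * c i ^ 2)⁻¹ := by
  set P := ∑ i, w i
  set Q := ∑ i, w i * c i
  set R := ∑ i, w i * c i ^ 2
  have hA : ∑ i, (1 + c i) ^ 2 * w i = P + 2 * Q + R := by
    simp only [P, Q, R, mul_sum, ← sum_add_distrib]; congr; ext; ring
  have hB : ∑ i, (1 + c i) * w i = P + Q := by
    simp only [P, Q, ← sum_add_distrib]; congr; ext; ring
  have hC : ∑ i, w i * (1 + 2 * c i) = P + 2 * Q := by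
    simp only [P, Q, mul_sum, ← sum_add_distrib]; congr; ext; ring
  have hP : 0 < 1 + P := by have := sum_nonneg fun i (_ : i ∈ univ) => (hw i).le; linarith
  have hR : 0 < R := sum_pos (fun i _ => mul_pos (hw i) (pow_pos (hc i) 2)) univ_nonempty
  rw [hC] at h
  have hgap : 0 < (P + 2 * Q - Q ^ 2) / (1 + P) := div_pos (by linarith) hP
  rw [hA, hB]
  apply inv_strictAnti₀ hR
  linarith [add_two_mul_sub_sq_div_one_add (Q := Q) hP.ne']

/-- Heterogeneous condition for the coded scheme to outperform the uncoded scheme. -/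
theorem coded_beats_uncoded_heterogeneous
    (K : ℕ) (hK : 1 ≤ K) (σθ2 : ℝ) (hσ : 0 < σθ2)
    (γch γob : Fin K → ℝ)
    (hch : ∀ k, 0 < γch k) (hob : ∀ k, 0 < γob k)
    (u lam : Fin K → ℝ)
    (hu : ∀ k, u k = 1 / (1 + γch k))
    (hlam : ∀ k, lam k = (1 + γch k + γob k) * γch k / ((1 + γch k)^2 * γob k))
    (hcond : ∑ k, (1 + 2 * γch k) * γob k / ((1 + γch k + γob k) * γch k)
        > (∑ k, γob k / (1 + γch k + γob k))^2) :
    σθ2 * (∑ k, 1 / lam k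
        - (∑ k, u k / lam k)^2 / (1 + ∑ k, (u k)^2 / lam k))⁻¹
      < σθ2 * (∑ k, 1 / (1 / γob k + 1 / γch k + 1 / (γob k * γch k)))⁻¹ := by
  have : Nonempty (Fin K) := ⟨⟨0, hK⟩⟩
  simp only [hu, hlam, one_div_lam_eq, u_div_lam_eq, u_sq_div_lam_eq, one_div_uncoded_eq,
    one_add_two_mul_mul_div_eq, div_one_add_add_eq, hch, hob] at hcond ⊢
  exact mul_lt_mul_of_pos_left
    (inv_sub_schur_lt_inv (fun k => sensorWeight_pos (hch k) (hob k)) hch hcond) hσ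
end
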